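/- Let I be a finite nonempty set of patients and J a finite set of beds, and for each i ∈ I let J_i ⊆ J be a nonempty set of beds allowable for patient i, with J = ⋃_{i∈I} J_i. Let (Ω, F, P) be a probability space with random variables d_j : Ω → ℝ for j ∈ J, let a : I → ℝ, τ : I → ℝ with τ_i > 0, u : I × J → ℝ with u_{ij} ≥ 0, and B ∈ ℝ, and define the feasible set F(B) of plans z : I × J → {0,1} that are admissible (z_{ij} = 0 for j ∉ J_i, ∑_{j∈J_i} z_{ij} = 1 for each i, ∑_{i∈I} z_{ij} ≤ 1 for each j) and satisfy ∑_{i∈I} ∑_{j∈J_i} z_{ij} u_{ij} ≤ B. Define W(z) = ∏_{i∈I} ∏_{j∈J_i} P(d_j − a_i ≤ τ_i)^{z_{ij}}. Fix t ∈ ℝ, suppose d_h ≥ t almost surely for all h ∈ J, and fix a bed j ∈ J with d_j = t almost surely. Suppose ẑ maximizes W over F(B), that ẑ_{kj} = 1 for a patient k, and that ℓ ∈ I is a patient of the same type as k (J_ℓ = J_k, τ_ℓ = τ_k, u_{ℓm} = u_{km} for all m ∈ J_k) with a_ℓ ≤ a_k, assigned under ẑ to a bed h (ẑ_{ℓh}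 = 1). Then the plan z* obtained from ẑ by setting z*_{kh} = 1, z*_{ℓj} = 1, z*_{kj} = 0, z*_{ℓh} = 0, and z*_{im} = ẑ_{im} otherwise, also maximizes W over F(B). -/

import Mathlib

open MeasureTheory ProbabilityTheory Finset

/-- An assignment plan `z` (with values in `{0,1}`, encoded as naturals `≤ 1`) is admissible if
patients can only be assigned beds in their allowable sets, every patient is assigned exactly one
bed, and every bed takes at most one patient. -/
def Admissible {I J : Type*} [Fintype I] (Ji : I → Finset J) (z : I → J → ℕ) : Prop :=
  (∀ i j, z i j ≤ 1) ∧ (∀ i j, j ∉ Ji i → z i j = 0) ∧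
    (∀ i, ∑ j ∈ Ji i, z i j = 1) ∧ (∀ j : J, ∑ i, z i j ≤ 1)

/-- Total overflow cost of a plan. -/
def overflowCost {I J : Type*} [Fintype I] (Ji : I → Finset J) (u : I → J → ℝ)
    (z : I → J → ℕ) : ℝ :=
  ∑ i, ∑ j ∈ Ji i, (z i j : ℝ) * u i j

/-- The `P` model objective: the product over assigned patient–bed pairs of the probabilities
that the boarding time `d j - a i` meets the delay target `τ i`. -/
noncomputable def objW {I J Ω : Type*} [Fintype I] [MeasurableSpace Ω] (Ji : I → Finset J)
    (μ : Measure Ω) (d : J → Ω → ℝ) (a τ : I → ℝ) (z : I → J → ℕ) : ENNReal :=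
  ∏ i, ∏ j ∈ Ji i, (μ {ω | d j ω - a i ≤ τ i}) ^ (z i j)

/-- Patients `i` and `k` are of the same type. -/
def SameType {I J : Type*} (Ji : I → Finset J) (τ : I → ℝ) (u : I → J → ℝ) (i k : I) : Prop :=
  Ji i = Ji k ∧ τ i = τ k ∧ ∀ m ∈ Ji i, u i m = u k m

/-- The plan obtained from `zhat` by switching the beds `j` and `h` of patients `k` and `l`. -/
def swapPlan {I J : Type*} [DecidableEq I] [DecidableEq J]
    (zhat : I → J → ℕ) (k l : I) (j h : J) : I → J → ℕ :=
  fun i m =>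
    if (i = k ∧ m = h) ∨ (i = l ∧ m = j) then 1
    else if (i = k ∧ m = j) ∨ (i = l ∧ m = h) then 0
    else zhat i m

/-! Since every admissible plan gives each patient exactly one bed and each bed at most one
patient, it is `i ↦ σ i` for an injective `σ` with `σ i ∈ J_i`, and the swapped plan is
`σ ∘ (k l)`. Same-type patients share allowable beds and costs, so the swap is admissible with
the same cost. In the objective only the factors of `k` and `ℓ` change, and the exchange does not
lose: if `t - a_ℓ ≤ τ`, then `ℓ` meets the target on the available bed `j` almost surely, and `k`
(with `a_ℓ ≤ a_k`) meets it on `h` whenever `ℓ` does; otherwise `d_h ≥ t` makes `ℓ`'s factor on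
`h` vanish. -/

lemma Finset.eq_zero_of_sum_le_one_of_eq_one {α : Type*} {s : Finset α} {f : α → ℕ}
    (hs : ∑ x ∈ s, f x ≤ 1) {a b : α} (ha : a ∈ s) (hb : b ∈ s) (hab : a ≠ b) (hfa : f a = 1) :
    f b = 0 := by
  have hpair : f a + f b ≤ ∑ x ∈ s, f x := by
    classical
    rw [← sum_pair hab]
    exact sum_le_sum_of_subset (insert_subset ha (singleton_subset_iff.2 hb))
  omega

lemma prod_le_prod_of_eq_off_pair {ι M : Type*} [Fintype ι] [DecidableEq ι] [CommMonoid M]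
    [PartialOrder M] [MulLeftMono M] {f g : ι → M} {k l : ι} (hkl : k ≠ l)
    (hpair : f k * f l ≤ g k * g l) (hrest : ∀ i, i ≠ k → i ≠ l → f i = g i) :
    ∏ i, f i ≤ ∏ i, g i := by
  rw [← prod_mul_prod_compl {k, l} f, ← prod_mul_prod_compl {k, l} g,
    prod_pair hkl, prod_pair hkl]
  refine le_of_le_of_eq (mul_le_mul_left hpair _) (congrArg _ (prod_congr rfl ?_))
  intro i hi
  simp only [mem_compl, mem_insert, mem_singleton, not_or] at hi
  exact hrest i hi.1 hi.2

def planOfBeds {I J : Type*} [DecidableEq J] (σ : I → J) : I → J → ℕ :=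
  fun i m => if σ i = m then 1 else 0

section Plans

variable {I J : Type*} [Fintype I] [DecidableEq J] {Ji : I → Finset J}

theorem Admissible.exists_eq_planOfBeds {z : I → J → ℕ} (hz : Admissible Ji z) :
    ∃ σ : I → J, Function.Injective σ ∧ (∀ i, σ i ∈ Ji i) ∧ z = planOfBeds σ := by
  obtain ⟨hle, hout, hrow, hcol⟩ := hz
  have hbed : ∀ i, ∃ m ∈ Ji i, z i m = 1 := fun i => by
    obtain ⟨m, hm, hne⟩ := exists_ne_zero_of_sum_ne_zero (hrow i ▸ one_ne_zero)
    exact ⟨m, hm, by have := hle i m; omega⟩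
  choose σ hσJ hσ using hbed
  refine ⟨σ, fun i i' hii' => ?_, hσJ, funext₂ fun i m => ?_⟩
  · by_contra hne
    have := Finset.eq_zero_of_sum_le_one_of_eq_one (hcol (σ i)) (mem_univ i)
      (mem_univ i') hne (hσ i)
    rw [hii', hσ i'] at this
    exact one_ne_zero this
  · by_cases hm : σ i = m
    · simp [planOfBeds, hm, ← hσ i]
    · rw [planOfBeds, if_neg hm]
      by_cases hmJ : m ∈ Ji i
      · exact Finset.eq_zero_of_sum_le_one_of_eq_one (hrow i).le (hσJ i) hmJ hm (hσ i)
      · exact hout i m hmJ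

theorem admissible_planOfBeds {σ : I → J} (hσ : Function.Injective σ) (hσJ : ∀ i, σ i ∈ Ji i) :
    Admissible Ji (planOfBeds σ) := by
  refine ⟨fun i m => ?_, fun i m hm => if_neg fun (him : σ i = m) => hm (him ▸ hσJ i),
    fun i => ?_, fun m => ?_⟩
  · unfold planOfBeds; split_ifs <;> simp
  · simp [planOfBeds, sum_ite_eq, hσJ i]
  · simp only [planOfBeds, sum_boole, Nat.cast_id]
    exact card_le_one.2 fun i hi i' hi' => hσ <| by
      simp only [mem_filter] at hi hi'
      rw [hi.2, hi'.2]

theorem overflowCost_planOfBeds (u : I → J → ℝ) {σ : I → J} (hσJ : ∀ i, σ i ∈ Ji i) :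
    overflowCost Ji u (planOfBeds σ) = ∑ i, u i (σ i) :=
  sum_congr rfl fun i _ => by simp [planOfBeds, sum_ite_eq, hσJ i]

theorem objW_planOfBeds {Ω : Type*} [MeasurableSpace Ω] (μ : Measure Ω) (d : J → Ω → ℝ)
    (a τ : I → ℝ) {σ : I → J} (hσJ : ∀ i, σ i ∈ Ji i) :
    objW Ji μ d a τ (planOfBeds σ) = ∏ i, μ {ω | d (σ i) ω - a i ≤ τ i} :=
  prod_congr rfl fun i _ => by simp [planOfBeds, pow_ite, prod_ite_eq, hσJ i]

end Plans

theorem mem_of_comp_swap {I J : Type*} [DecidableEq I] {Ji : I → Finset J} {σ : I → J}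
    (hσJ : ∀ i, σ i ∈ Ji i) {k l : I} (hJ : Ji k = Ji l) (i : I) :
    (σ ∘ Equiv.swap k l) i ∈ Ji i :=
  Equiv.apply_swap_eq_self hJ i ▸ hσJ _

theorem swapPlan_planOfBeds {I J : Type*} [DecidableEq I] [DecidableEq J] {σ : I → J} {k l : I}
    {j h : J} (hk : σ k = j) (hl : σ l = h) :
    swapPlan (planOfBeds σ) k l j h = planOfBeds (σ ∘ Equiv.swap k l) := by
  funext i m
  simp only [swapPlan, planOfBeds, Function.comp_apply, Equiv.swap_apply_def]
  split_ifs <;> grind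

theorem SameType.cost_swap {I J : Type*} [DecidableEq I] {Ji : I → Finset J} {τ : I → ℝ}
    {u : I → J → ℝ} {k l : I} (hst : SameType Ji τ u k l) {i : I} {m : J} (hm : m ∈ Ji i) :
    u (Equiv.swap k l i) m = u i m := by
  rcases eq_or_ne i k with rfl | hik
  · simp [hst.2.2 m hm]
  rcases eq_or_ne i l with rfl | hil
  · simp [hst.2.2 m (hst.1 ▸ hm)]
  rw [Equiv.swap_apply_of_ne_of_ne hik hil]

theorem measure_mul_measure_le_of_ae_eq_of_ae_le {Ω : Type*} [MeasurableSpace Ω] {μ : Measure Ω}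
    {X Y : Ω → ℝ} {t : ℝ} (hX : ∀ᵐ ω ∂μ, X ω = t) (hY : ∀ᵐ ω ∂μ, t ≤ Y ω) {a a' c : ℝ}
    (ha : a' ≤ a) :
    μ {ω | X ω - a ≤ c} * μ {ω | Y ω - a' ≤ c} ≤ μ {ω | Y ω - a ≤ c} * μ {ω | X ω - a' ≤ c} := by
  by_cases htc : t - a' ≤ c
  · have hXfull : μ {ω | X ω - a' ≤ c} = μ Set.univ := by
      refine measure_congr (Filter.eventuallyEq_univ.2 ?_)
      filter_upwards [hX] with ω hω
      simpa [hω] using htc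
    rw [hXfull, mul_comm]
    refine mul_le_mul' (measure_mono fun ω (hω : Y ω - a' ≤ c) => ?_)
      (measure_mono (Set.subset_univ _))
    change Y ω - a ≤ c
    linarith
  · have hYnull : μ {ω | Y ω - a' ≤ c} = 0 := by
      rw [measure_eq_zero_iff_ae_notMem]
      filter_upwards [hY] with ω hω (hmem : Y ω - a' ≤ c)
      exact htc (by linarith)
    rw [hYnull, mul_zero]
    exact zero_le

theorem objW_planOfBeds_le_comp_swap {I J Ω : Type*} [Fintype I] [DecidableEq I] [DecidableEq J]
    [MeasurableSpace Ω] {μ : Measure Ω} {Ji : I → Finset J} {d : J → Ω → ℝ} {a τ : I → ℝ}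
    {σ : I → J} (hσJ : ∀ i, σ i ∈ Ji i) {k l : I} (hJ : Ji k = Ji l) (hτ : τ k = τ l)
    (hal : a l ≤ a k) {t : ℝ} (hk : ∀ᵐ ω ∂μ, d (σ k) ω = t) (hl : ∀ᵐ ω ∂μ, t ≤ d (σ l) ω) :
    objW Ji μ d a τ (planOfBeds σ) ≤ objW Ji μ d a τ (planOfBeds (σ ∘ Equiv.swap k l)) := by
  rw [objW_planOfBeds μ d a τ hσJ, objW_planOfBeds μ d a τ (mem_of_comp_swap hσJ hJ)]
  rcases eq_or_ne k l with rfl | hkl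
  · simp
  refine prod_le_prod_of_eq_off_pair hkl ?_ fun i hik hil => ?_
  · simpa [hτ, mul_comm] using measure_mul_measure_le_of_ae_eq_of_ae_le hk hl hal (c := τ l)
  · simp [Equiv.swap_apply_of_ne_of_ne hik hil]

theorem swap_preserves_optimality_general
    {I J Ω : Type*} [Fintype I] [DecidableEq I] [DecidableEq J]
    [MeasurableSpace Ω] {μ : Measure Ω}
    (Ji : I → Finset J)
    (d : J → Ω → ℝ)
    (a τ : I → ℝ)
    (u : I → J → ℝ) (B : ℝ)
    (t : ℝ) (hall : ∀ h : J, ∀ᵐ ω ∂μ, t ≤ d h ω)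
    (j : J) (hj : ∀ᵐ ω ∂μ, d j ω = t)
    (zhat : I → J → ℕ)
    (hadm : Admissible Ji zhat) (hcost : overflowCost Ji u zhat ≤ B)
    (hmax : ∀ z : I → J → ℕ, Admissible Ji z → overflowCost Ji u z ≤ B →
      objW Ji μ d a τ z ≤ objW Ji μ d a τ zhat)
    (k : I) (hkj : zhat k j = 1)
    (l : I) (hst : SameType Ji τ u k l) (hal : a l ≤ a k)
    (h : J) (hlh : zhat l h = 1) :
    Admissible Ji (swapPlan zhat k l j h) ∧
      overflowCost Ji u (swapPlan zhat k l j h) ≤ B ∧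
      ∀ z : I → J → ℕ, Admissible Ji z → overflowCost Ji u z ≤ B →
        objW Ji μ d a τ z ≤ objW Ji μ d a τ (swapPlan zhat k l j h) := by
  obtain ⟨σ, hσ, hσJ, rfl⟩ := hadm.exists_eq_planOfBeds
  have hσk : σ k = j := by simpa [planOfBeds] using hkj
  have hσl : σ l = h := by simpa [planOfBeds] using hlh
  have hσJ' := mem_of_comp_swap hσJ hst.1
  have hcost_eq : overflowCost Ji u (planOfBeds (σ ∘ Equiv.swap k l)) =
      overflowCost Ji u (planOfBeds σ) := by
    rw [overflowCost_planOfBeds u hσJ', overflowCost_planOfBeds u hσJ,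
      ← Equiv.sum_comp (Equiv.swap k l)]
    exact sum_congr rfl fun i _ => by simp [hst.cost_swap (hσJ i)]
  have hobj := objW_planOfBeds_le_comp_swap hσJ hst.1 hst.2.1 hal (μ := μ) (d := d)
    (hσk ▸ hj) (hσl ▸ hall h)
  rw [swapPlan_planOfBeds hσk hσl]
  exact ⟨admissible_planOfBeds (hσ.comp (Equiv.injective _)) hσJ', hcost_eq ▸ hcost,
    fun z hz hzc => (hmax z hz hzc).trans hobj⟩

/-- Switching the beds of a same-type pair, so that the earlier-requesting patient receives the
currently available bed, preserves optimality of the `P` model. -/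
theorem swap_preserves_optimality
    {I J Ω : Type*} [Fintype I] [Nonempty I] [Fintype J] [DecidableEq I] [DecidableEq J]
    [MeasurableSpace Ω] {μ : Measure Ω} [IsProbabilityMeasure μ]
    (Ji : I → Finset J) (hJiNe : ∀ i, (Ji i).Nonempty)
    (hJcover : ∀ j : J, ∃ i, j ∈ Ji i)
    (d : J → Ω → ℝ) (hd : ∀ j, Measurable (d j))
    (a τ : I → ℝ) (hτ : ∀ i, 0 < τ i)
    (u : I → J → ℝ) (hu : ∀ i j, 0 ≤ u i j) (B : ℝ)
    (t : ℝ) (hall : ∀ h : J, ∀ᵐ ω ∂μ, t ≤ d h ω)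
    (j : J) (hj : ∀ᵐ ω ∂μ, d j ω = t)
    (zhat : I → J → ℕ)
    (hadm : Admissible Ji zhat) (hcost : overflowCost Ji u zhat ≤ B)
    (hmax : ∀ z : I → J → ℕ, Admissible Ji z → overflowCost Ji u z ≤ B →
      objW Ji μ d a τ z ≤ objW Ji μ d a τ zhat)
    (k : I) (hkj : zhat k j = 1)
    (l : I) (hst : SameType Ji τ u k l) (hal : a l ≤ a k)
    (h : J) (hlh : zhat l h = 1) :
    Admissible Ji (swapPlan zhat k l j h) ∧
      overflowCost Ji u (swapPlan zhat k l j h) ≤ B ∧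
      ∀ z : I → J → ℕ, Admissible Ji z → overflowCost Ji u z ≤ B →
        objW Ji μ d a τ z ≤ objW Ji μ d a τ (swapPlan zhat k l j h) :=
  swap_preserves_optimality_general Ji d a τ u B t hall j hj zhat hadm hcost hmax k hkj l hst hal h
    hlh
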